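/- Let N ≥ 2, let Ω ⊂ ℝ^N be a bounded open set, let H : Ω × ℝ^N → ℝ be continuous and satisfy (SC1) with constant b, and let f : Ω → ℝ be continuous and bounded. Then every bounded upper semicontinuous viscosity subsolution u of 𝒫⁻₁(D²u) + H(x,∇u) = f(x) in Ω is locally Lipschitz continuous in Ω, with local Lipschitz constants controlled by a constant depending only on b, sup|u| and sup|f| (and the distance to ∂Ω). -/

import Mathlib

open Metric Filter Topology Set

/-- `𝒫⁻ₖ(D²φ(x))`: the sum of the `k` smallest eigenvalues of the Hessian of `φ` at `x`,
expressed through the min-max representation over orthonormal `k`-frames. -/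
noncomputable def Pminus {N : ℕ} (k : ℕ) (φ : EuclideanSpace ℝ (Fin N) → ℝ)
    (x : EuclideanSpace ℝ (Fin N)) : ℝ :=
  sInf {s : ℝ | ∃ ξ : Fin k → EuclideanSpace ℝ (Fin N), Orthonormal ℝ ξ ∧
    s = ∑ i, iteratedFDeriv ℝ 2 φ x ![ξ i, ξ i]}

/-- `𝒫⁺ₖ(D²φ(x))`: the sum of the `k` largest eigenvalues of the Hessian of `φ` at `x`. -/
noncomputable def Pplus {N : ℕ} (k : ℕ) (φ : EuclideanSpace ℝ (Fin N) → ℝ)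
    (x : EuclideanSpace ℝ (Fin N)) : ℝ :=
  sSup {s : ℝ | ∃ ξ : Fin k → EuclideanSpace ℝ (Fin N), Orthonormal ℝ ξ ∧
    s = ∑ i, iteratedFDeriv ℝ 2 φ x ![ξ i, ξ i]}

/-- Viscosity subsolution of `P(D²u) + H(x,∇u) + μ u = f(x)` in `Ω`:
for every `x₀ ∈ Ω` and every `C²` test function `φ` such that `u - φ` has a local
maximum (relative to `Ω`) at `x₀`, one has `P(D²φ(x₀)) + H(x₀,∇φ(x₀)) + μ u(x₀) ≥ f(x₀)`. -/
def IsViscSubsol {N : ℕ}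
    (P : (EuclideanSpace ℝ (Fin N) → ℝ) → EuclideanSpace ℝ (Fin N) → ℝ)
    (Ω : Set (EuclideanSpace ℝ (Fin N)))
    (H : EuclideanSpace ℝ (Fin N) → EuclideanSpace ℝ (Fin N) → ℝ)
    (μ : ℝ) (f : EuclideanSpace ℝ (Fin N) → ℝ)
    (u : EuclideanSpace ℝ (Fin N) → ℝ) : Prop :=
  ∀ x₀ ∈ Ω, ∀ φ : EuclideanSpace ℝ (Fin N) → ℝ, ContDiffAt ℝ 2 φ x₀ →
    IsLocalMaxOn (fun x => u x - φ x) Ω x₀ →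
    f x₀ ≤ P φ x₀ + H x₀ (gradient φ x₀) + μ * u x₀

/-- Viscosity supersolution of `P(D²u) + H(x,∇u) + μ u = f(x)` in `Ω`. -/
def IsViscSupersol {N : ℕ}
    (P : (EuclideanSpace ℝ (Fin N) → ℝ) → EuclideanSpace ℝ (Fin N) → ℝ)
    (Ω : Set (EuclideanSpace ℝ (Fin N)))
    (H : EuclideanSpace ℝ (Fin N) → EuclideanSpace ℝ (Fin N) → ℝ)
    (μ : ℝ) (f : EuclideanSpace ℝ (Fin N) → ℝ)
    (u : EuclideanSpace ℝ (Fin N) → ℝ) : Prop :=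
  ∀ x₀ ∈ Ω, ∀ φ : EuclideanSpace ℝ (Fin N) → ℝ, ContDiffAt ℝ 2 φ x₀ →
    IsLocalMinOn (fun x => u x - φ x) Ω x₀ →
    P φ x₀ + H x₀ (gradient φ x₀) + μ * u x₀ ≤ f x₀

/-- Structure condition (SC1): `|H(x,ξ)| ≤ b‖ξ‖`. -/
def SC1 {N : ℕ} (Ω : Set (EuclideanSpace ℝ (Fin N)))
    (H : EuclideanSpace ℝ (Fin N) → EuclideanSpace ℝ (Fin N) → ℝ) (b : ℝ) : Prop :=
  ∀ x ∈ Ω, ∀ ξ : EuclideanSpace ℝ (Fin N), |H x ξ| ≤ b * ‖ξ‖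

/-- Structure condition (SC2): positive 1-homogeneity in the gradient variable. -/
def SC2 {N : ℕ} (Ω : Set (EuclideanSpace ℝ (Fin N)))
    (H : EuclideanSpace ℝ (Fin N) → EuclideanSpace ℝ (Fin N) → ℝ) : Prop :=
  ∀ x ∈ Ω, ∀ t : ℝ, 0 ≤ t → ∀ ξ : EuclideanSpace ℝ (Fin N), H x (t • ξ) = t * H x ξ

/-- Structure condition (SC3): uniform continuity in `x` through a modulus of continuity. -/
def SC3 {N : ℕ} (Ω : Set (EuclideanSpace ℝ (Fin N)))
    (H : EuclideanSpace ℝ (Fin N) → EuclideanSpace ℝ (Fin N) → ℝ) : Prop :=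
  ∃ ω : ℝ → ℝ, Monotone ω ∧ Filter.Tendsto ω (𝓝[>] (0 : ℝ)) (𝓝 (0 : ℝ)) ∧
    ∀ x ∈ Ω, ∀ y ∈ Ω, ∀ ξ : EuclideanSpace ℝ (Fin N),
      |H x ξ - H y ξ| ≤ ω (‖x - y‖ * (1 + ‖ξ‖))

/-- `Ω ∈ 𝒞_R`: a "hula hoop" domain, i.e. an intersection of a nonempty family of
open balls of the common radius `R`. -/
def HulaHoop {N : ℕ} (R : ℝ) (Ω : Set (EuclideanSpace ℝ (Fin N))) : Prop :=
  ∃ Y : Set (EuclideanSpace ℝ (Fin N)), Y.Nonempty ∧ Ω = ⋂ y ∈ Y, ball y R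

/-- `μ̄ₖ⁻(Ω)`: the supremum (in `EReal`) of those `μ` for which there is an upper
semicontinuous `w < 0` on `cl(Ω)` which is a viscosity subsolution of
`𝒫⁻ₖ(D²w) + H(x,∇w) + μ w = 0` in `Ω`. -/
noncomputable def muBarMinus {N : ℕ} (k : ℕ) (Ω : Set (EuclideanSpace ℝ (Fin N)))
    (H : EuclideanSpace ℝ (Fin N) → EuclideanSpace ℝ (Fin N) → ℝ) : EReal :=
  sSup {m : EReal | ∃ μ : ℝ, m = (μ : EReal) ∧ ∃ w : EuclideanSpace ℝ (Fin N) → ℝ,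
    UpperSemicontinuousOn w (closure Ω) ∧ (∀ x ∈ closure Ω, w x < 0) ∧
    IsViscSubsol (Pminus k) Ω H μ (fun _ => 0) w}

/-- `μₖ⁻(Ω)`: as `μ̄ₖ⁻(Ω)`, but only requiring `w < 0` (and upper semicontinuous) in `Ω`. -/
noncomputable def muMinus {N : ℕ} (k : ℕ) (Ω : Set (EuclideanSpace ℝ (Fin N)))
    (H : EuclideanSpace ℝ (Fin N) → EuclideanSpace ℝ (Fin N) → ℝ) : EReal :=
  sSup {m : EReal | ∃ μ : ℝ, m = (μ : EReal) ∧ ∃ w : EuclideanSpace ℝ (Fin N) → ℝ,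
    UpperSemicontinuousOn w Ω ∧ (∀ x ∈ Ω, w x < 0) ∧
    IsViscSubsol (Pminus k) Ω H μ (fun _ => 0) w}

/-- `μ̄ₖ⁺(Ω)`: the supremum (in `EReal`) of those `μ` for which there is a lower
semicontinuous `w > 0` on `cl(Ω)` which is a viscosity supersolution of
`𝒫⁻ₖ(D²w) + H(x,∇w) + μ w = 0` in `Ω`. -/
noncomputable def muBarPlus {N : ℕ} (k : ℕ) (Ω : Set (EuclideanSpace ℝ (Fin N)))
    (H : EuclideanSpace ℝ (Fin N) → EuclideanSpace ℝ (Fin N) → ℝ) : EReal :=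
  sSup {m : EReal | ∃ μ : ℝ, m = (μ : EReal) ∧ ∃ w : EuclideanSpace ℝ (Fin N) → ℝ,
    LowerSemicontinuousOn w (closure Ω) ∧ (∀ x ∈ closure Ω, 0 < w x) ∧
    IsViscSupersol (Pminus k) Ω H μ (fun _ => 0) w}

/-- `μₖ⁺(Ω)`: as `μ̄ₖ⁺(Ω)`, but only requiring `w > 0` (and lower semicontinuous) in `Ω`. -/
noncomputable def muPlus {N : ℕ} (k : ℕ) (Ω : Set (EuclideanSpace ℝ (Fin N)))
    (H : EuclideanSpace ℝ (Fin N) → EuclideanSpace ℝ (Fin N) → ℝ) : EReal :=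
  sSup {m : EReal | ∃ μ : ℝ, m = (μ : EReal) ∧ ∃ w : EuclideanSpace ℝ (Fin N) → ℝ,
    LowerSemicontinuousOn w Ω ∧ (∀ x ∈ Ω, 0 < w x) ∧
    IsViscSupersol (Pminus k) Ω H μ (fun _ => 0) w}

/-!
Around each `y` near `x₀`, compare `u` with the cone `u(y) + L‖z - y‖ - K‖z - y‖²`. If `u` rose
above it somewhere on a ball `B(y, R)`, the excess would attain a positive maximum at a point
`x ≠ y` inside the ball (the bound on `u` rules out the sphere). There the cone is smooth, its
gradient has norm at most `L` and its second derivative in the radial direction is `-2K`, so the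
subsolution inequality forces `-sup|f| ≤ -2K + bL`, which fails once `K ≫ (b + 1)L`. Hence
`u(x) - u(y) ≤ L‖x - y‖` near `x₀`, with `L` depending only on `b`, `sup|u|`, `sup|f|` and the
distance to `∂Ω`.
-/

theorem iteratedFDeriv_two_apply_self_eq_deriv_deriv {E : Type*} [NormedAddCommGroup E]
    [NormedSpace ℝ E] {f : E → ℝ} {x : E} (hf : ContDiffAt ℝ 2 f x) (v : E) :
    iteratedFDeriv ℝ 2 f x ![v, v] = deriv (deriv fun t : ℝ => f (x + t • v)) 0 := by
  have hline (t : ℝ) : HasDerivAt (fun s : ℝ => x + s • v) v t := by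
    simpa using ((hasDerivAt_id t).smul_const v).const_add x
  have hdiff : ∀ᶠ t in 𝓝 (0 : ℝ), DifferentiableAt ℝ f (x + t • v) := by
    have hx : Tendsto (fun t : ℝ => x + t • v) (𝓝 0) (𝓝 x) := by
      simpa using (hline 0).continuousAt.tendsto
    exact hx.eventually <| (hf.eventually (by simp)).mono fun z hz =>
      hz.differentiableAt (by norm_num)
  have hderiv : deriv (fun t : ℝ => f (x + t • v)) =ᶠ[𝓝 0]
      fun t => fderiv ℝ f (x + t • v) v :=
    hdiff.mono fun t ht => (ht.hasFDerivAt.comp_hasDerivAt t (hline t)).deriv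
  have hf' : DifferentiableAt ℝ (fderiv ℝ f) x :=
    (hf.fderiv_right (m := 1) (by norm_num)).differentiableAt (by norm_num)
  have hsecond : HasDerivAt (fun t : ℝ => fderiv ℝ f (x + t • v) v)
      (fderiv ℝ (fderiv ℝ f) x v v) 0 :=
    (ContinuousLinearMap.apply ℝ ℝ v).hasFDerivAt.comp_hasDerivAt 0
      (hf'.hasFDerivAt.comp_hasDerivAt_of_eq 0 (hline 0) (by simp))
  rw [hderiv.deriv_eq, hsecond.deriv, iteratedFDeriv_two_apply]
  rfl

section Radial

variable {E : Type*} [NormedAddCommGroup E] [InnerProductSpace ℝ E] {g : ℝ → ℝ} {x y : E}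

theorem contDiffAt_comp_norm_sub (hg : ContDiffAt ℝ 2 g ‖x - y‖) (hxy : x ≠ y) :
    ContDiffAt ℝ 2 (fun z => g ‖z - y‖) x :=
  hg.comp x <|
    (contDiffAt_norm ℝ (sub_ne_zero.mpr hxy)).comp x (contDiffAt_id.sub contDiffAt_const)

theorem norm_fderiv_comp_norm_sub_le (hg : DifferentiableAt ℝ g ‖x - y‖) (hxy : x ≠ y) :
    ‖fderiv ℝ (fun z => g ‖z - y‖) x‖ ≤ |deriv g ‖x - y‖| := by
  have hnorm : DifferentiableAt ℝ (fun z : E => ‖z - y‖) x :=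
    ((contDiffAt_norm ℝ (n := 1) (sub_ne_zero.mpr hxy)).differentiableAt one_ne_zero).comp x
      (differentiableAt_id.sub_const y)
  have hlip : LipschitzWith 1 fun z : E => ‖z - y‖ :=
    LipschitzWith.of_dist_le_mul fun z w => by
      simpa [dist_eq_norm] using abs_norm_sub_norm_le (z - y) (w - y)
  rw [show (fun z => g ‖z - y‖) = g ∘ fun z => ‖z - y‖ from rfl,
    (hg.hasDerivAt.comp_hasFDerivAt x hnorm.hasFDerivAt).fderiv, norm_smul, Real.norm_eq_abs]
  simpa using mul_le_mul_of_nonneg_left (norm_fderiv_le_of_lipschitz ℝ hlip) (abs_nonneg _)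

theorem iteratedFDeriv_comp_norm_sub_radial (hg : ContDiffAt ℝ 2 g ‖x - y‖) (hxy : x ≠ y) :
    iteratedFDeriv ℝ 2 (fun z => g ‖z - y‖) x ![‖x - y‖⁻¹ • (x - y), ‖x - y‖⁻¹ • (x - y)]
      = deriv (deriv g) ‖x - y‖ := by
  set ρ := ‖x - y‖ with hρ
  have hρ0 : 0 < ρ := norm_pos_iff.mpr (sub_ne_zero.mpr hxy)
  have hline : (fun t : ℝ => g ‖x + t • ρ⁻¹ • (x - y) - y‖) =ᶠ[𝓝 0] fun t => g (ρ + t) := by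
    filter_upwards [Ioi_mem_nhds (neg_lt_zero.mpr hρ0)] with t ht
    have ht : 0 < ρ + t := by linarith [mem_Ioi.mp ht]
    rw [show x + t • ρ⁻¹ • (x - y) - y = ((ρ + t) / ρ) • (x - y) by
        rw [add_div, div_self hρ0.ne']; module, norm_smul,
      Real.norm_of_nonneg (by positivity), ← hρ, div_mul_cancel₀ _ hρ0.ne']
  rw [iteratedFDeriv_two_apply_self_eq_deriv_deriv (contDiffAt_comp_norm_sub hg hxy),
    hline.deriv.deriv_eq]
  have hshift : deriv (fun t => g (ρ + t)) = fun t => deriv g (ρ + t) :=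
    funext (deriv_comp_const_add g ρ)
  rw [hshift, deriv_comp_const_add (deriv g), add_zero]

end Radial

theorem Pminus_one_le_iteratedFDeriv {N : ℕ} (φ : EuclideanSpace ℝ (Fin N) → ℝ)
    (x : EuclideanSpace ℝ (Fin N)) {e : EuclideanSpace ℝ (Fin N)} (he : ‖e‖ = 1) :
    Pminus 1 φ x ≤ iteratedFDeriv ℝ 2 φ x ![e, e] := by
  refine csInf_le ⟨-‖iteratedFDeriv ℝ 2 φ x‖, ?_⟩ ⟨fun _ => e, ?_, by simp⟩
  · rintro s ⟨ξ, hξ, rfl⟩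
    have hbound := (iteratedFDeriv ℝ 2 φ x).le_opNorm ![ξ 0, ξ 0]
    simp only [Fin.prod_univ_two, Matrix.cons_val_zero, Matrix.cons_val_one, hξ.1 0,
      mul_one] at hbound
    simpa using (abs_le.mp (Real.norm_eq_abs _ ▸ hbound)).1
  · exact ⟨fun _ => he, fun i j hij => absurd (Subsingleton.elim i j) hij⟩

section Subsolution

variable {N : ℕ} {Ω : Set (EuclideanSpace ℝ (Fin N))}
  {H : EuclideanSpace ℝ (Fin N) → EuclideanSpace ℝ (Fin N) → ℝ} {b : ℝ}
  {f u : EuclideanSpace ℝ (Fin N) → ℝ}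

theorem IsViscSubsol.le_of_isLocalMaxOn_sub_comp_norm_sub
    (hsub : IsViscSubsol (Pminus 1) Ω H 0 f u) (hSC1 : SC1 Ω H b) (hb : 0 ≤ b)
    {g : ℝ → ℝ} {x y : EuclideanSpace ℝ (Fin N)} (hg : ContDiffAt ℝ 2 g ‖x - y‖)
    (hx : x ∈ Ω) (hxy : x ≠ y) (hmax : IsLocalMaxOn (fun z => u z - g ‖z - y‖) Ω x) :
    f x ≤ deriv (deriv g) ‖x - y‖ + b * |deriv g ‖x - y‖| := by
  have hvisc := hsub x hx _ (contDiffAt_comp_norm_sub hg hxy) hmax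
  have hunit : ‖‖x - y‖⁻¹ • (x - y)‖ = 1 := by
    rw [norm_smul, norm_inv, norm_norm,
      inv_mul_cancel₀ (norm_ne_zero_iff.mpr (sub_ne_zero.mpr hxy))]
  have hP := Pminus_one_le_iteratedFDeriv (fun z => g ‖z - y‖) x hunit
  rw [iteratedFDeriv_comp_norm_sub_radial hg hxy] at hP
  have hgrad : ‖gradient (fun z => g ‖z - y‖) x‖ ≤ |deriv g ‖x - y‖| := by
    rw [← (InnerProductSpace.toDual ℝ _).norm_map, toDual_gradient]
    exact norm_fderiv_comp_norm_sub_le (hg.differentiableAt two_ne_zero) hxy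
  have hH := (le_abs_self _).trans (hSC1 x hx (gradient (fun z => g ‖z - y‖) x))
  nlinarith [mul_le_mul_of_nonneg_left hgrad hb]

theorem IsViscSubsol.le_add_cone (hsub : IsViscSubsol (Pminus 1) Ω H 0 f u)
    (husc : UpperSemicontinuousOn u Ω) (hSC1 : SC1 Ω H b) (hb : 0 ≤ b) {m : ℝ}
    (hf : ∀ x ∈ Ω, m ≤ f x) {y : EuclideanSpace ℝ (Fin N)} {R D L K : ℝ}
    (hyR : closedBall y R ⊆ Ω) (hosc : ∀ x ∈ closedBall y R, u x ≤ u y + D)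
    (hK : 0 ≤ K) (hKL : 2 * K * R ≤ L) (hD : D ≤ L * R - K * R ^ 2) (hm : b * L < 2 * K + m) :
    ∀ x ∈ closedBall y R, u x ≤ u y + (L * ‖x - y‖ - K * ‖x - y‖ ^ 2) := by
  set g : ℝ → ℝ := fun s => L * s - K * s ^ 2 with hg
  by_contra! hcon
  obtain ⟨x₁, hx₁, hx₁gt⟩ := hcon
  have husc' : UpperSemicontinuousOn (fun z => u z - g ‖z - y‖) (closedBall y R) :=
    (husc.mono hyR).add
      (by fun_prop : Continuous fun z => -g ‖z - y‖).continuousOn.upperSemicontinuousOn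
  obtain ⟨x, hx, hmax⟩ := husc'.exists_isMaxOn ⟨x₁, hx₁⟩ (isCompact_closedBall y R)
  have hpos : u y < u x - g ‖x - y‖ := by
    have hle : u x₁ - g ‖x₁ - y‖ ≤ u x - g ‖x - y‖ := hmax hx₁
    simp only [hg] at hle ⊢
    linarith
  have hxy : x ≠ y := by
    rintro rfl
    simp [hg] at hpos
  have hxR : ‖x - y‖ < R := by
    refine lt_of_le_of_ne (mem_closedBall_iff_norm.mp hx) fun hR => ?_
    have := hosc x hx
    simp only [hg, hR] at hpos
    linarith
  have hlocmax : IsLocalMaxOn (fun z => u z - g ‖z - y‖) Ω x :=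
    mem_nhdsWithin_of_mem_nhds <| mem_of_superset (isOpen_ball.mem_nhds (mem_ball_iff_norm.mpr hxR))
      fun z hz => hmax (ball_subset_closedBall hz)
  have hderiv : deriv g = fun s => L - 2 * K * s := funext fun s =>
    (((hasDerivAt_id' s).const_mul L).sub ((hasDerivAt_pow 2 s).const_mul K)).deriv.trans
      (by norm_num; ring)
  have hderiv2 : deriv (deriv g) = fun _ => -(2 * K) := by
    simp [hderiv]
  have hvisc := hsub.le_of_isLocalMaxOn_sub_comp_norm_sub hSC1 hb
    (by fun_prop : ContDiff ℝ 2 g).contDiffAt (hyR hx) hxy hlocmax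
  rw [hderiv2, hderiv] at hvisc
  have hslope : |L - 2 * K * ‖x - y‖| ≤ L :=
    abs_le.mpr ⟨by nlinarith [norm_nonneg (x - y)], by nlinarith [norm_nonneg (x - y)]⟩
  nlinarith [hf x (hyR hx), mul_le_mul_of_nonneg_left hslope hb]

end Subsolution

theorem exists_cone_params {b m D R : ℝ} (hb : 0 ≤ b) (hD : 0 ≤ D) (hR : 0 < R)
    (hRb : 4 * (b + 1) * R ≤ 1) :
    ∃ L K : ℝ, 0 ≤ K ∧ 2 * K * R ≤ L ∧ D ≤ L * R - K * R ^ 2 ∧ b * L < 2 * K + m := by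
  set L := |m| + 2 * D / R + 1
  have hL1 : |m| + 1 ≤ L := by
    have := div_nonneg (mul_nonneg zero_le_two hD) hR.le
    linarith
  have hDL : 2 * D ≤ L * R := by
    have : 2 * D / R * R = 2 * D := div_mul_cancel₀ _ hR.ne'
    nlinarith [abs_nonneg m]
  have hKR : L / (4 * R) * R = L / 4 := by field_simp
  have hK2 : 2 * (b + 1) * L ≤ 2 * (L / (4 * R)) := by
    rw [mul_div_assoc', le_div_iff₀ (by positivity)]
    nlinarith [abs_nonneg m, div_nonneg hD hR.le]
  refine ⟨L, L / (4 * R), by positivity, by nlinarith, by nlinarith, ?_⟩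
  nlinarith [mul_nonneg hb ((abs_nonneg m).trans (by linarith : |m| ≤ L)), neg_abs_le m]

theorem statement6_general {N : ℕ}
    (Ω : Set (EuclideanSpace ℝ (Fin N))) (hΩopen : IsOpen Ω)
    (H : EuclideanSpace ℝ (Fin N) → EuclideanSpace ℝ (Fin N) → ℝ) (b : ℝ) (hb : 0 ≤ b)
    (hSC1 : SC1 Ω H b)
    (f : EuclideanSpace ℝ (Fin N) → ℝ)
    (hfb : ∃ M : ℝ, ∀ x ∈ Ω, |f x| ≤ M)
    (u : EuclideanSpace ℝ (Fin N) → ℝ)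
    (hubdd : ∃ M : ℝ, ∀ x ∈ Ω, |u x| ≤ M)
    (husc : UpperSemicontinuousOn u Ω)
    (hsub : IsViscSubsol (Pminus 1) Ω H 0 f u) :
    ∀ x ∈ Ω, ∃ r > (0 : ℝ), ∃ L : NNReal,
      ball x r ⊆ Ω ∧ LipschitzOnWith L u (ball x r) := by
  obtain ⟨Mf, hMf⟩ := hfb
  obtain ⟨Mu, hMu⟩ := hubdd
  intro x₀ hx₀
  obtain ⟨ε, hε, hεΩ⟩ := Metric.isOpen_iff.mp hΩopen x₀ hx₀
  set r := min (ε / 3) (1 / (8 * (b + 1)))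
  have hr0 : 0 < r := lt_min (by positivity) (by positivity)
  have hclosedBall : ∀ y ∈ ball x₀ r, closedBall y (2 * r) ⊆ Ω := fun y hy z hz =>
    hεΩ <| calc dist z x₀ ≤ dist z y + dist y x₀ := dist_triangle z y x₀
      _ < 2 * r + r := add_lt_add_of_le_of_lt hz hy
      _ ≤ ε := by linarith [min_le_left (ε / 3) (1 / (8 * (b + 1)))]
  have hRb : 4 * (b + 1) * (2 * r) ≤ 1 := by
    have := min_le_right (ε / 3) (1 / (8 * (b + 1)))
    rw [le_div_iff₀ (by positivity)] at this
    linarith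
  obtain ⟨L, K, hK, hKL, hD, hm⟩ := exists_cone_params (m := -Mf) hb
    (mul_nonneg zero_le_two ((abs_nonneg _).trans (hMu x₀ hx₀))) (by positivity) hRb
  refine ⟨r, hr0, L.toNNReal, fun z hz => hclosedBall x₀ (mem_ball_self hr0)
    (mem_closedBall.mpr (by linarith [mem_ball.mp hz])), LipschitzOnWith.of_le_add_mul' L ?_⟩
  intro x hx y hy
  have hcone := hsub.le_add_cone husc hSC1 hb (fun z hz => neg_le_of_abs_le (hMf z hz))
    (hclosedBall y hy) (fun z hz => ?_) hK hKL hD hm x ?_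
  · rw [dist_eq_norm]
    nlinarith [mul_nonneg hK (sq_nonneg ‖x - y‖)]
  · have hyΩ := hclosedBall y hy (mem_closedBall_self (by positivity))
    linarith [le_abs_self (u z), hMu z (hclosedBall y hy hz), neg_abs_le (u y), hMu y hyΩ]
  · exact mem_closedBall.mpr ((dist_triangle_right x y x₀).trans
      (by linarith [mem_ball.mp hx, mem_ball.mp hy]))

/-- interior Lipschitz regularity: every bounded upper semicontinuous
viscosity subsolution of `𝒫⁻₁(D²u) + H(x,∇u) = f` in a bounded open set `Ω` is
locally Lipschitz continuous in `Ω`. -/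
theorem statement6 {N : ℕ} (hN : 2 ≤ N)
    (Ω : Set (EuclideanSpace ℝ (Fin N))) (hΩopen : IsOpen Ω)
    (hΩbdd : Bornology.IsBounded Ω)
    (H : EuclideanSpace ℝ (Fin N) → EuclideanSpace ℝ (Fin N) → ℝ) (b : ℝ) (hb : 0 ≤ b)
    (hHcont : ContinuousOn (Function.uncurry H)
      (Ω ×ˢ (univ : Set (EuclideanSpace ℝ (Fin N)))))
    (hSC1 : SC1 Ω H b)
    (f : EuclideanSpace ℝ (Fin N) → ℝ)
    (hfc : ContinuousOn f Ω) (hfb : ∃ M : ℝ, ∀ x ∈ Ω, |f x| ≤ M)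
    (u : EuclideanSpace ℝ (Fin N) → ℝ)
    (hubdd : ∃ M : ℝ, ∀ x ∈ Ω, |u x| ≤ M)
    (husc : UpperSemicontinuousOn u Ω)
    (hsub : IsViscSubsol (Pminus 1) Ω H 0 f u) :
    ∀ x ∈ Ω, ∃ r > (0 : ℝ), ∃ L : NNReal,
      ball x r ⊆ Ω ∧ LipschitzOnWith L u (ball x r) :=
  statement6_general Ω hΩopen H b hb hSC1 f hfb u hubdd husc hsub
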